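/- arXiv:2208.02988 — 3 statements merged into one kernel-verified Lean document; each statement's English description precedes it below -/
import Mathlib

section
/- For every k ≥ 2 and n ≥ 2k+3, the spectral radius of the complete split graph satisfies ρ(S_{n,2k−1}) ≥ √((2k−1)n). -/
open Finset Matrix

/-- `G` contains `k` pairwise vertex-disjoint cycles. -/
def HasNDisjointCycles {V : Type*} (G : SimpleGraph V) (k : ℕ) : Prop :=
  ∃ (v : Fin k → V) (w : ∀ i : Fin k, G.Walk (v i) (v i)),
    (∀ i, (w i).IsCycle) ∧
    ∀ i j : Fin k, i ≠ j → ∀ y, y ∈ (w i).support → y ∉ (w j).support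

/-- The complete split graph on `n` vertices: the join of a clique on the first `r`
vertices with an independent set on the remaining `n - r` vertices. -/
def completeSplitGraph (n r : ℕ) : SimpleGraph (Fin n) where
  Adj u v := u ≠ v ∧ ((u : ℕ) < r ∨ (v : ℕ) < r)
  symm := ⟨fun u v h => ⟨h.1.symm, h.2.symm⟩⟩
  loopless := ⟨fun u h => h.1 rfl⟩

instance (n r : ℕ) : DecidableRel (completeSplitGraph n r).Adj :=
  fun u v => inferInstanceAs (Decidable (u ≠ v ∧ ((u : ℕ) < r ∨ (v : ℕ) < r)))

/-- The spectral radius of a finite simple graph: the largest eigenvalue of its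
adjacency matrix, i.e. the supremum of its (real) eigenvalues. -/
noncomputable def graphSpectralRadius {V : Type*} [Fintype V] (G : SimpleGraph V)
    [DecidableRel G.Adj] : ℝ :=
  sSup {μ : ℝ | ∃ f : V → ℝ, f ≠ 0 ∧ G.adjMatrix ℝ *ᵥ f = μ • f}

/-- `eAB G A B` is the number of ordered pairs `(u, w) ∈ A × B` with `uw` an edge of `G`. -/
noncomputable def eAB {V : Type*} (G : SimpleGraph V) (A B : Set V) : ℕ :=
  {p : V × V | p.1 ∈ A ∧ p.2 ∈ B ∧ G.Adj p.1 p.2}.ncard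

/-- `eIn G S` is the number of edges of `G` with both endpoints in `S`. -/
noncomputable def eIn {V : Type*} (G : SimpleGraph V) (S : Set V) : ℕ :=
  {e : Sym2 V | e ∈ G.edgeSet ∧ ∀ v ∈ e, v ∈ S}.ncard


/-!
The vector equal to `μ` on the clique and to `r` on the independent set is an eigenvector
of `S_{n,r}` as soon as `μ² = (r - 1) μ + r (n - r)`, so the nonnegative root `μ` of this
quadratic is an eigenvalue, and for `r ≥ 3`, `n ≥ r + 4` it satisfies `μ² ≥ r n`. Real
eigenvalues of a graph are bounded by its maximum degree, so the supremum defining the spectral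
radius is at least `μ`.
-/

namespace SimpleGraph

variable {V : Type*} [Fintype V] (G : SimpleGraph V) [DecidableRel G.Adj]

theorem abs_le_maxDegree_of_adjMatrix_mulVec_eq_smul {μ : ℝ} {f : V → ℝ} (hf : f ≠ 0)
    (h : G.adjMatrix ℝ *ᵥ f = μ • f) : |μ| ≤ G.maxDegree := by
  obtain ⟨w, hw⟩ := Function.ne_iff.mp hf
  obtain ⟨v, -, hv⟩ := exists_max_image univ (fun x => |f x|) ⟨w, mem_univ w⟩
  have hfv : 0 < |f v| := (abs_pos.mpr hw).trans_le (hv w (mem_univ w))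
  have hμv : μ * f v = ∑ u ∈ G.neighborFinset v, f u := by
    simpa [adjMatrix_mulVec_apply] using (congrFun h v).symm
  refine le_of_mul_le_mul_right ?_ hfv
  calc |μ| * |f v| = |∑ u ∈ G.neighborFinset v, f u| := by rw [← abs_mul, hμv]
    _ ≤ ∑ u ∈ G.neighborFinset v, |f u| := abs_sum_le_sum_abs _ _
    _ ≤ G.degree v • |f v| := sum_le_card_nsmul _ _ _ fun u _ => hv u (mem_univ u)
    _ ≤ G.maxDegree * |f v| := by
      rw [nsmul_eq_mul]
      gcongr
      exact_mod_cast G.degree_le_maxDegree v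

theorem bddAbove_adjMatrix_eigenvalues :
    BddAbove {μ : ℝ | ∃ f : V → ℝ, f ≠ 0 ∧ G.adjMatrix ℝ *ᵥ f = μ • f} :=
  ⟨G.maxDegree, fun _ ⟨_, hf, h⟩ =>
    (le_abs_self _).trans (G.abs_le_maxDegree_of_adjMatrix_mulVec_eq_smul hf h)⟩

theorem le_graphSpectralRadius {μ : ℝ} {f : V → ℝ} (hf : f ≠ 0)
    (h : G.adjMatrix ℝ *ᵥ f = μ • f) : μ ≤ graphSpectralRadius G :=
  le_csSup G.bddAbove_adjMatrix_eigenvalues ⟨f, hf, h⟩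

end SimpleGraph

section completeSplitGraph

variable {n r : ℕ}

theorem Fin.sum_ite_val_lt {M : Type*} [AddCommMonoid M] (hr : r ≤ n) (a b : M) :
    ∑ u : Fin n, (if (u : ℕ) < r then a else b) = r • a + (n - r) • b := by
  have hcard : #{u : Fin n | (u : ℕ) < r} = r := by
    rw [Fin.card_filter_val_lt, min_eq_right hr]
  have hcard' : #{u : Fin n | ¬(u : ℕ) < r} = n - r := by
    have := card_filter_add_card_filter_not (s := univ) fun u : Fin n => (u : ℕ) < r
    simp only [card_univ, Fintype.card_fin] at this
    omega
  rw [sum_ite, Finset.sum_const, Finset.sum_const, hcard, hcard']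

theorem completeSplitGraph_adjMatrix_mulVec_apply {R : Type*} [NonAssocRing R] (f : Fin n → R)
    (v : Fin n) :
    ((completeSplitGraph n r).adjMatrix R *ᵥ f) v =
      if (v : ℕ) < r then ∑ u, f u - f v else ∑ u ∈ {u : Fin n | (u : ℕ) < r}, f u := by
  rw [SimpleGraph.adjMatrix_mulVec_apply, SimpleGraph.neighborFinset_eq_filter]
  split_ifs with hv
  · rw [← sum_erase_eq_sub (mem_univ v)]
    congr 1
    ext u
    simp [completeSplitGraph, hv, eq_comm]
  · congr 1
    ext u
    simp only [completeSplitGraph, mem_filter, mem_univ, true_and, hv, false_or]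
    exact ⟨And.right, fun hu => ⟨fun h => hv (h ▸ hu), hu⟩⟩

theorem completeSplitGraph_adjMatrix_mulVec_eq_smul {R : Type*} [CommRing R] (hr : r ≤ n)
    {μ : R} (hμ : μ ^ 2 = (r - 1) * μ + r * (n - r)) :
    (completeSplitGraph n r).adjMatrix R *ᵥ (fun v : Fin n => if (v : ℕ) < r then μ else r) =
      μ • fun v : Fin n => if (v : ℕ) < r then μ else r := by
  have hnr : ((n - r : ℕ) : R) = n - r := Nat.cast_sub hr
  funext v
  rw [completeSplitGraph_adjMatrix_mulVec_apply, Fin.sum_ite_val_lt hr]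
  split_ifs with hv
  · simp only [Pi.smul_apply, if_pos hv, smul_eq_mul, nsmul_eq_mul, hnr]
    linear_combination -hμ
  · rw [sum_congr rfl fun u hu => if_pos (mem_filter.mp hu).2, Finset.sum_const,
      Fin.card_filter_val_lt, min_eq_right hr]
    simp [hv, mul_comm]

end completeSplitGraph

theorem exists_nonneg_sq_eq_mul_add {a c : ℝ} (ha : 0 ≤ a) (hc : 0 ≤ c) :
    ∃ x : ℝ, 0 ≤ x ∧ x ^ 2 = a * x + c := by
  have hd : 0 ≤ a ^ 2 + 4 * c := by positivity
  refine ⟨(a + √(a ^ 2 + 4 * c)) / 2, by positivity, ?_⟩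
  linear_combination Real.sq_sqrt hd / 4

theorem sqrt_mul_le_of_sq_eq {r x μ : ℝ} (hr : 3 ≤ r) (hx : r + 4 ≤ x) (hμ0 : 0 ≤ μ)
    (hμ : μ ^ 2 = (r - 1) * μ + r * (x - r)) : √(r * x) ≤ μ := by
  rw [Real.sqrt_le_left hμ0]
  suffices r ^ 2 ≤ (r - 1) * μ by nlinarith
  by_contra! ht
  -- `t = (r - 1) μ < r²` forces `t (t - (r - 1)²) < r² (2r - 1)`,
  -- which is at most `4r (r - 1)²` when `r ≥ 3`
  have hgap : 4 * r ≤ μ * (μ - (r - 1)) := by nlinarith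
  have hlt : (r - 1) ^ 2 * (μ * (μ - (r - 1))) < r ^ 2 * (2 * r - 1) := by
    nlinarith [mul_pos (sub_pos.2 ht) (by nlinarith : 0 < 2 * r - 1 + (r - 1) * μ)]
  nlinarith [mul_le_mul_of_nonneg_left hgap (sq_nonneg (r - 1))]

theorem stmt4 (k n : ℕ) (hk : 2 ≤ k) (hn : 2 * k + 3 ≤ n) :
    Real.sqrt ((2 * (k : ℝ) - 1) * n) ≤ graphSpectralRadius (completeSplitGraph n (2 * k - 1)) := by
  have hr : ((2 * k - 1 : ℕ) : ℝ) = 2 * k - 1 := by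
    rw [Nat.cast_sub (by omega)]
    push_cast
    ring
  have hk' : (2 : ℝ) ≤ k := by exact_mod_cast hk
  have hn' : (2 * k + 3 : ℝ) ≤ n := by exact_mod_cast hn
  have hr3 : (3 : ℝ) ≤ 2 * k - 1 := by linarith
  have hrn : (2 * k - 1 : ℝ) + 4 ≤ n := by linarith
  obtain ⟨μ, hμ0, hμ⟩ := exists_nonneg_sq_eq_mul_add (a := 2 * k - 1 - 1)
    (c := (2 * k - 1) * (n - (2 * k - 1))) (by linarith) (by nlinarith)
  have hf :
      (fun v : Fin n => if (v : ℕ) < 2 * k - 1 then μ else ((2 * k - 1 : ℕ) : ℝ)) ≠ 0 :=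
    Function.ne_iff.mpr ⟨⟨2 * k - 1, by omega⟩, by
      simp only [lt_self_iff_false, ↓reduceIte, hr, Pi.zero_apply, ne_eq]
      linarith⟩
  calc √((2 * k - 1) * n) ≤ μ := sqrt_mul_le_of_sq_eq hr3 hrn hμ0 hμ
    _ ≤ graphSpectralRadius (completeSplitGraph n (2 * k - 1)) :=
      (completeSplitGraph n (2 * k - 1)).le_graphSpectralRadius hf
        (completeSplitGraph_adjMatrix_mulVec_eq_smul (by omega) (by rw [hr]; exact hμ))
end

section
/- Let k ≥ 2 and n ≥ 2k+3, and let G* be an n-vertex graph containing no k independent cycles whose spectral radius ρ = ρ(G*) is maximum among all n-vertex graphs containing no k independent cycles. Then ρ ≥ √((2k−1)n). -/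
/-!
The complete split graph `K_r ∨ K̄_{n-r}` with `r = 2k - 1` has no `k` disjoint cycles: its clique
is a vertex cover, and a cycle meets every vertex cover in at least two vertices (a vertex off the
cover has both cycle neighbours on it), so `k` disjoint cycles would need `2k` cover vertices.
Its adjacency matrix has the eigenvector equal to `μ` on the clique and to `r` elsewhere, where
`μ² = (r - 1)μ + r(n - r)`; for the positive root `μ` and `n ≥ r + 4` one checks
`(r - 1)μ ≥ r²`, i.e. `μ² ≥ rn`. Maximality of `G` then gives `ρ ≥ √(rn)`.
-/

open Finset Matrix

namespace SimpleGraph.Walk.IsCycle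

variable {V : Type*} {G : SimpleGraph V}

theorem two_le_card_support_inter [DecidableEq V] {u : V} {p : G.Walk u u} (hp : p.IsCycle)
    {S : Finset V} (hS : G.IsVertexCover S) : 2 ≤ #(p.support.toFinset ∩ S) := by
  by_contra! h
  have : Nonempty V := ⟨u⟩
  obtain ⟨v₀, hv₀⟩ := card_le_one_iff_subset_singleton.mp (Nat.le_of_lt_succ h)
  have hsupp : ∀ y ∈ p.support, y ∈ S → y = v₀ := fun y hy hyS =>
    mem_singleton.mp (hv₀ (mem_inter.mpr ⟨List.mem_toFinset.mpr hy, hyS⟩))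
  obtain ⟨x, hx, hxv₀⟩ : ∃ x ∈ p.support, x ≠ v₀ := by
    by_cases hu : u = v₀
    · exact ⟨p.snd, p.getVert_mem_support 1, hu ▸ (p.adj_snd hp.not_nil).ne.symm⟩
    · exact ⟨u, p.start_mem_support, hu⟩
  have hxS : x ∉ S := fun hxS => hxv₀ (hsupp x hx hxS)
  have hsub : p.toSubgraph.neighborSet x ⊆ {v₀} := fun y hy =>
    hsupp y (p.mem_support_of_adj_toSubgraph hy.symm)
      ((hS (p.toSubgraph.adj_sub hy)).resolve_left hxS)
  have := Set.ncard_le_ncard hsub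
  rw [hp.ncard_neighborSet_toSubgraph_eq_two hx, Set.ncard_singleton] at this
  omega

end SimpleGraph.Walk.IsCycle

theorem not_hasNDisjointCycles_of_isVertexCover {V : Type*} [DecidableEq V] {G : SimpleGraph V}
    {k : ℕ} {S : Finset V} (hS : G.IsVertexCover S) (hcard : #S < 2 * k) :
    ¬ HasNDisjointCycles G k := by
  rintro ⟨v, w, hcyc, hdisj⟩
  set T : Fin k → Finset V := fun i => (w i).support.toFinset ∩ S
  have hT : ((univ : Finset (Fin k)) : Set (Fin k)).PairwiseDisjoint T := fun i _ j _ hij =>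
    disjoint_left.mpr fun y hyi hyj => hdisj i j hij y
      (List.mem_toFinset.mp (mem_inter.mp hyi).1) (List.mem_toFinset.mp (mem_inter.mp hyj).1)
  have : 2 * k ≤ #S := calc
    2 * k = ∑ _i : Fin k, 2 := by simp [mul_comm]
    _ ≤ ∑ i, #(T i) := sum_le_sum fun i _ => (hcyc i).two_le_card_support_inter hS
    _ = #(univ.biUnion T) := (card_biUnion hT).symm
    _ ≤ #S := card_le_card (biUnion_subset.mpr fun i _ => inter_subset_right)
  omega

section spectralRadius

variable {V : Type*} [Fintype V] {G : SimpleGraph V} [DecidableRel G.Adj]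

theorem abs_le_maxDegree_of_adjMatrix_mulVec_eq_smul {f : V → ℝ} {μ : ℝ} (hf0 : f ≠ 0)
    (hf : G.adjMatrix ℝ *ᵥ f = μ • f) : |μ| ≤ G.maxDegree := by
  obtain ⟨x, hx⟩ := Function.ne_iff.mp hf0
  obtain ⟨u, -, hu⟩ := exists_max_image univ (fun y => |f y|) ⟨x, mem_univ x⟩
  have hfu : 0 < |f u| := (abs_pos.mpr hx).trans_le (hu x (mem_univ x))
  have heq : ∑ y ∈ G.neighborFinset u, f y = μ * f u := by
    rw [← SimpleGraph.adjMatrix_mulVec_apply, hf, Pi.smul_apply, smul_eq_mul]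
  refine le_of_mul_le_mul_right ?_ hfu
  calc |μ| * |f u| = |∑ y ∈ G.neighborFinset u, f y| := by rw [heq, abs_mul]
    _ ≤ ∑ y ∈ G.neighborFinset u, |f y| := abs_sum_le_sum_abs _ _
    _ ≤ ∑ _y ∈ G.neighborFinset u, |f u| := sum_le_sum fun y _ => hu y (mem_univ y)
    _ = G.degree u * |f u| := by
      rw [sum_const, nsmul_eq_mul, SimpleGraph.card_neighborFinset_eq_degree]
    _ ≤ G.maxDegree * |f u| := by gcongr; exact_mod_cast G.degree_le_maxDegree u

theorem le_graphSpectralRadius {f : V → ℝ} {μ : ℝ} (hf0 : f ≠ 0)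
    (hf : G.adjMatrix ℝ *ᵥ f = μ • f) : μ ≤ graphSpectralRadius G :=
  le_csSup ⟨G.maxDegree, fun _ ⟨_, hg0, hg⟩ =>
    (le_abs_self _).trans (abs_le_maxDegree_of_adjMatrix_mulVec_eq_smul hg0 hg)⟩ ⟨f, hf0, hf⟩

end spectralRadius

section completeSplitGraph

variable {n r : ℕ}

@[simp]
theorem completeSplitGraph_adj {u v : Fin n} :
    (completeSplitGraph n r).Adj u v ↔ u ≠ v ∧ ((u : ℕ) < r ∨ (v : ℕ) < r) :=
  Iff.rfl

theorem isVertexCover_completeSplitGraph :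
    (completeSplitGraph n r).IsVertexCover ↑(univ.filter fun u : Fin n => (u : ℕ) < r) :=
  fun _ _ h => by simpa using h.2

theorem not_hasNDisjointCycles_completeSplitGraph {k : ℕ} (hr : r < 2 * k) :
    ¬ HasNDisjointCycles (completeSplitGraph n r) k :=
  not_hasNDisjointCycles_of_isVertexCover isVertexCover_completeSplitGraph
    (by rw [Fin.card_filter_val_lt]; omega)

theorem completeSplitGraph_adjMatrix_mulVec (hr : r ≤ n) {μ : ℝ}
    (hμ : μ ^ 2 = (r - 1) * μ + r * (n - r)) :
    (completeSplitGraph n r).adjMatrix ℝ *ᵥ (fun u : Fin n => if (u : ℕ) < r then μ else r) =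
      μ • fun u : Fin n => if (u : ℕ) < r then μ else r := by
  set f : Fin n → ℝ := fun u => if (u : ℕ) < r then μ else r
  have hclique : #(univ.filter fun u : Fin n => (u : ℕ) < r) = r := by
    rw [Fin.card_filter_val_lt]; omega
  have hsum_clique : ∑ v ∈ univ.filter (fun v : Fin n => (v : ℕ) < r), f v = r * μ := by
    rw [sum_congr rfl fun v hv => if_pos (mem_filter.mp hv).2, sum_const, hclique, nsmul_eq_mul]
  have hsum : ∑ v, f v = r * μ + (n - r) * r := by
    rw [← sum_filter_add_sum_filter_not univ (fun v : Fin n => (v : ℕ) < r), hsum_clique,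
      sum_congr rfl fun v hv => if_neg (mem_filter.mp hv).2, sum_const, nsmul_eq_mul,
      filter_not, card_sdiff_of_subset (filter_subset _ _), hclique, card_univ, Fintype.card_fin,
      Nat.cast_sub hr]
  funext u
  rw [SimpleGraph.adjMatrix_mulVec_apply, Pi.smul_apply, smul_eq_mul]
  by_cases hu : (u : ℕ) < r
  · have hN : (completeSplitGraph n r).neighborFinset u = univ.erase u := by
      ext v; simp [hu, ne_comm]
    rw [hN, sum_erase_eq_sub (mem_univ u), hsum]
    simp only [f, if_pos hu]
    linear_combination -hμ
  · have hN : (completeSplitGraph n r).neighborFinset u = univ.filter fun v : Fin n => (v : ℕ) < r := by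
      ext v
      simp only [SimpleGraph.mem_neighborFinset, completeSplitGraph_adj, mem_filter, mem_univ,
        true_and]
      exact ⟨fun h => h.2.resolve_left hu, fun h => ⟨fun huv => hu (huv ▸ h), Or.inr h⟩⟩
    rw [hN, hsum_clique]
    simp only [f, if_neg hu]
    ring

theorem sqrt_mul_le_graphSpectralRadius_completeSplitGraph (hr : 3 ≤ r) (hn : r + 4 ≤ n) :
    √(r * n) ≤ graphSpectralRadius (completeSplitGraph n r) := by
  have hr' : (3 : ℝ) ≤ r := by exact_mod_cast hr
  have hn' : (r : ℝ) + 4 ≤ n := by exact_mod_cast hn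
  set D : ℝ := (r - 1) ^ 2 + 4 * r * (n - r)
  have hD : 0 ≤ D := by nlinarith
  set μ : ℝ := (r - 1 + √D) / 2
  have hμ : μ ^ 2 = (r - 1) * μ + r * (n - r) := by
    linear_combination (1 / 4 : ℝ) * Real.sq_sqrt hD
  have hμ0 : 0 ≤ μ := by
    have := Real.sqrt_nonneg D
    show 0 ≤ (r - 1 + √D) / 2
    linarith
  have hroot : (r : ℝ) ^ 2 + 2 * r - 1 ≤ (r - 1) * √D := by
    rw [← Real.sqrt_sq (by linarith : (0 : ℝ) ≤ r - 1), ← Real.sqrt_mul (by positivity)]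
    apply Real.le_sqrt_of_sq_le
    nlinarith [mul_le_mul_of_nonneg_left hn' (by positivity : (0 : ℝ) ≤ 4 * r * (r - 1) ^ 2)]
  have hrμ : (r : ℝ) ^ 2 ≤ (r - 1) * μ := by
    show (r : ℝ) ^ 2 ≤ (r - 1) * ((r - 1 + √D) / 2)
    linarith
  have hrn : (r : ℝ) * n ≤ μ ^ 2 := by linarith
  have hf0 : (fun u : Fin n => if (u : ℕ) < r then μ else (r : ℝ)) ≠ 0 := fun h => by
    have hr0 : r = 0 := by simpa using congrFun h ⟨r, by omega⟩
    omega
  calc √(r * n) ≤ √(μ ^ 2) := Real.sqrt_le_sqrt hrn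
    _ = μ := Real.sqrt_sq hμ0
    _ ≤ _ := le_graphSpectralRadius hf0 (completeSplitGraph_adjMatrix_mulVec (by omega) hμ)

end completeSplitGraph

theorem stmt5_general (k n : ℕ) (hk : 2 ≤ k) (hn : 2 * k + 3 ≤ n)
    (G : SimpleGraph (Fin n)) [DecidableRel G.Adj]
    (hmax : ∀ (H : SimpleGraph (Fin n)) [DecidableRel H.Adj],
      ¬ HasNDisjointCycles H k → graphSpectralRadius H ≤ graphSpectralRadius G)
    (ρ : ℝ) (hρ : ρ = graphSpectralRadius G) :
    Real.sqrt ((2 * (k : ℝ) - 1) * n) ≤ ρ := by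
  have hcast : (2 * (k : ℝ) - 1) = ((2 * k - 1 : ℕ) : ℝ) := by
    rw [Nat.cast_sub (by omega), Nat.cast_mul]; norm_num
  calc Real.sqrt ((2 * (k : ℝ) - 1) * n)
      ≤ graphSpectralRadius (completeSplitGraph n (2 * k - 1)) := by
        rw [hcast]; exact sqrt_mul_le_graphSpectralRadius_completeSplitGraph (by omega) (by omega)
    _ ≤ ρ := hρ ▸ hmax _ (not_hasNDisjointCycles_completeSplitGraph (by omega))

theorem stmt5 (k n : ℕ) (hk : 2 ≤ k) (hn : 2 * k + 3 ≤ n)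
    (G : SimpleGraph (Fin n)) [DecidableRel G.Adj]
    (hG : ¬ HasNDisjointCycles G k)
    (hmax : ∀ (H : SimpleGraph (Fin n)) [DecidableRel H.Adj],
      ¬ HasNDisjointCycles H k → graphSpectralRadius H ≤ graphSpectralRadius G)
    (ρ : ℝ) (hρ : ρ = graphSpectralRadius G) :
    Real.sqrt ((2 * (k : ℝ) - 1) * n) ≤ ρ :=
  stmt5_general k n hk hn G hmax ρ hρ
end

section
/- Let k ≥ 2, λ = 1/(120k²), and n ≥ 16(2k−1)/λ². Let G* be an n-vertex graph containing no k independent cycles whose spectral radius ρ = ρ(G*) is maximum among all n-vertex graphs containing no k independent cycles, let x be a unit eigenvector of the adjacency matrix of G* for the eigenvalue ρ with all entries nonnegative, and let u* be a vertex with x_{u*} = max_u x_u. Let R' = {v ∈ V(G*) : x_v > 4λ x_{u*}}. Then for each vertex v ∈ R', e(N(v) \ R', R' \ {v}) ≤ (2k−2)d(v) + (2k−1)|R'|. -/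
open Finset Matrix

/-!
Suppose `e(A, B) > (2k - 2)|A| + (2k - 1)|B|`, where `A = N(v) \ R'` and `B = R' \ {v}`.
Deleting vertices of low degree one at a time leaves nonempty `A' ⊆ A`, `B' ⊆ B` such that every
vertex of `A'` has at least `2k - 1` neighbours in `B'` and every vertex of `B'` at least `2k`
in `A'`. A shortest cycle of the bipartite graph between `A'` and `B'` has at most two neighbours
of any vertex, so removing it costs every remaining vertex at most two neighbours, and some vertex
of `A'` survives. After `k - 1` such cycles a vertex `b ∈ B'` with two neighbours
`a₁, a₂ ∈ A'` is left, and `v a₁ b a₂` is a `k`-th cycle, disjoint from the others.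
-/

theorem Finset.exists_core_of_mul_add_mul_lt_sum {α β : Type*} [DecidableEq α] [DecidableEq β]
    (r : α → β → Prop) [∀ a b, Decidable (r a b)] (p q : ℕ) (A : Finset α) (B : Finset β)
    (h : p * #A + q * #B < ∑ a ∈ A, #{b ∈ B | r a b}) :
    ∃ A' ⊆ A, ∃ B' ⊆ B, A'.Nonempty ∧ (∀ a ∈ A', p < #{b ∈ B' | r a b}) ∧
      ∀ b ∈ B', q < #{a ∈ A' | r a b} := by
  have hswap (A : Finset α) (B : Finset β) :
      ∑ a ∈ A, #{b ∈ B | r a b} = ∑ b ∈ B, #{a ∈ A | r a b} :=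
    sum_card_bipartiteAbove_eq_sum_card_bipartiteBelow r
  induction hn : #A + #B using Nat.strong_induction_on generalizing A B with
  | _ n ih =>
    by_cases hA : ∃ a ∈ A, #{b ∈ B | r a b} ≤ p
    · obtain ⟨a, ha, hle⟩ := hA
      have hsum := sum_erase_add A (fun a => #{b ∈ B | r a b}) ha
      have hcard := card_erase_add_one ha
      rw [← hcard, mul_add_one] at h
      obtain ⟨A', hA', B', hB', hcore⟩ := ih _ (by omega) (A.erase a) B (by omega) rfl
      exact ⟨A', hA'.trans (erase_subset a A), B', hB', hcore⟩
    by_cases hB : ∃ b ∈ B, #{a ∈ A | r a b} ≤ q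
    · obtain ⟨b, hb, hle⟩ := hB
      have hsum := sum_erase_add B (fun b => #{a ∈ A | r a b}) hb
      have hcard := card_erase_add_one hb
      rw [← hcard, mul_add_one, hswap] at h
      rw [← hswap] at hsum
      obtain ⟨A', hA', B', hB', hcore⟩ := ih _ (by omega) A (B.erase b) (by omega) rfl
      exact ⟨A', hA', B', hB'.trans (erase_subset b B), hcore⟩
    push Not at hA hB
    exact ⟨A, subset_rfl, B, subset_rfl, nonempty_of_sum_ne_zero (Nat.ne_zero_of_lt h), hA, hB⟩

theorem eAB_coe_eq_sum {V : Type*} [DecidableEq V] (G : SimpleGraph V) [DecidableRel G.Adj]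
    (A B : Finset V) : eAB G ↑A ↑B = ∑ a ∈ A, #{b ∈ B | G.Adj a b} := by
  have : {p : V × V | p.1 ∈ (A : Set V) ∧ p.2 ∈ (B : Set V) ∧ G.Adj p.1 p.2} =
      ↑{p ∈ A ×ˢ B | G.Adj p.1 p.2} := by
    ext; simp [and_assoc]
  rw [eAB, this, Set.ncard_coe_finset, card_filter, sum_product]
  simp only [card_filter]

namespace SimpleGraph

variable {V : Type*} {G : SimpleGraph V}

namespace Walk

theorem exists_getVert_eq_of_mem_support {u y : V} {w : G.Walk u u} (hw : ¬ w.Nil)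
    (hy : y ∈ w.support) : ∃ i < w.length, w.getVert i = y := by
  obtain ⟨i, rfl, hi⟩ := mem_support_iff_exists_getVert.mp hy
  rcases hi.lt_or_eq with hi | rfl
  · exact ⟨i, hi, rfl⟩
  · exact ⟨0, not_nil_iff_lt_length.mp hw, by simp⟩

theorem IsCycle.exists_isPath_getVert {u : V} {w : G.Walk u u} (hw : w.IsCycle) {p q : ℕ}
    (hpq : p ≤ q) (hq : q < w.length) :
    ∃ s : G.Walk (w.getVert p) (w.getVert q), s.IsPath ∧ s.length = q - p ∧
      ∀ x ∈ s.support, x ∈ w.support := by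
  refine ⟨((w.take q).drop p).copy (by simp [take_getVert, min_eq_right hpq]) rfl,
    ?_, ?_, fun x hx => ?_⟩
  · simpa using (hw.isPath_take hq).drop p
  · simp only [length_copy, drop_length, take_length]
    omega
  · rw [support_copy] at hx
    exact ((w.take q).isSubwalk_drop p).trans (w.isSubwalk_take q) |>.support_subset hx

theorem IsCycle.length_le_of_adj_of_notMem {u x : V} {w : G.Walk u u} (hw : w.IsCycle)
    (hmin : G.egirth = w.length) (hx : x ∉ w.support) {p q : ℕ} (hpq : p < q)
    (hq : q < w.length) (hxp : G.Adj x (w.getVert p)) (hxq : G.Adj x (w.getVert q)) :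
    w.length ≤ q - p + 2 := by
  obtain ⟨s, hs, hlen, hsw⟩ := hw.exists_isPath_getVert hpq.le hq
  have hc : (cons hxp (s.concat hxq.symm)).IsCycle := by
    rw [isCycle_iff_isPath_tail_and_le_length]
    simp only [Walk.tail_cons, length_cons, length_concat]
    exact ⟨(isPath_copy ..).mpr (hs.concat (fun h => hx (hsw _ h)) _), by omega⟩
  have := hmin ▸ G.egirth_le_length hc
  simp only [length_cons, length_concat, Nat.cast_le] at this
  omega

theorem IsCycle.length_le_of_adj_getVert {u : V} {w : G.Walk u u} (hw : w.IsCycle)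
    (hmin : G.egirth = w.length) {p q : ℕ} (hpq : p + 2 ≤ q) (hq : q < w.length)
    (h : G.Adj (w.getVert q) (w.getVert p)) : w.length ≤ q - p + 1 := by
  obtain ⟨s, hs, hlen, -⟩ := hw.exists_isPath_getVert (by omega : p ≤ q) hq
  have hc : (cons h s).IsCycle := by
    rw [isCycle_iff_isPath_tail_and_le_length]
    simp only [Walk.tail_cons, length_cons]
    exact ⟨(isPath_copy ..).mpr hs, by omega⟩
  have := hmin ▸ G.egirth_le_length hc
  simp only [length_cons, Nat.cast_le] at this
  omega

theorem IsCycle.card_filter_adj_le_two [DecidableEq V] [DecidableRel G.Adj]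
    (hG : G.CliqueFree 3) {u : V} {w : G.Walk u u} (hw : w.IsCycle)
    (hmin : G.egirth = w.length) (x : V) : #{y ∈ w.support.toFinset | G.Adj x y} ≤ 2 := by
  have h4 : 4 ≤ w.length := by
    have := hw.three_le_length
    by_contra h
    obtain ⟨s, hs⟩ := is3Clique_iff_exists_cycle_length_three.mpr ⟨u, w, hw, by omega⟩
    exact hG s hs
  have hidx := fun y => exists_getVert_eq_of_mem_support (y := y) hw.not_nil
  by_contra! hcard
  obtain ⟨_, hy₁, _, hy₂, _, hy₃, h₁₂, h₁₃, h₂₃⟩ := two_lt_card.mp hcard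
  simp only [mem_filter, List.mem_toFinset] at hy₁ hy₂ hy₃
  obtain ⟨i₁, hi₁, rfl⟩ := hidx _ hy₁.1
  obtain ⟨i₂, hi₂, rfl⟩ := hidx _ hy₂.1
  obtain ⟨i₃, hi₃, rfl⟩ := hidx _ hy₃.1
  have hne : i₁ ≠ i₂ ∧ i₁ ≠ i₃ ∧ i₂ ≠ i₃ := by
    refine ⟨?_, ?_, ?_⟩ <;> rintro rfl <;> simp_all
  -- Three neighbours of `x` on `w` close a shorter cycle: through a chord if `x` lies on `w`,
  -- through `x` and the shorter of two arcs otherwise.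
  by_cases hx : x ∈ w.support
  · obtain ⟨t, ht, rfl⟩ := hidx _ hx
    have chord : ∀ i, i < w.length → G.Adj (w.getVert t) (w.getVert i) →
        i ≠ t ∧ (i < t → t - i ≤ 1 ∨ w.length ≤ t - i + 1) ∧
          (t < i → i - t ≤ 1 ∨ w.length ≤ i - t + 1) := by
      intro i hi hadj
      refine ⟨fun h => hadj.ne (by rw [h]), fun hit => ?_, fun hti => ?_⟩
      · by_contra! h
        have := hw.length_le_of_adj_getVert hmin (by omega : i + 2 ≤ t) ht hadj
        omega
      · by_contra! h
        have := hw.length_le_of_adj_getVert hmin (by omega : t + 2 ≤ i) hi hadj.symm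
        omega
    have := chord _ hi₁ hy₁.2
    have := chord _ hi₂ hy₂.2
    have := chord _ hi₃ hy₃.2
    omega
  · have off : ∀ i j, i < w.length → j < w.length → G.Adj x (w.getVert i) →
        G.Adj x (w.getVert j) → i < j → w.length ≤ j - i + 2 :=
      fun i j _ hj hxi hxj hij => hw.length_le_of_adj_of_notMem hmin hx hij hj hxi hxj
    have := off _ _ hi₁ hi₂ hy₁.2 hy₂.2
    have := off _ _ hi₂ hi₁ hy₂.2 hy₁.2
    have := off _ _ hi₁ hi₃ hy₁.2 hy₃.2
    have := off _ _ hi₃ hi₁ hy₃.2 hy₁.2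
    have := off _ _ hi₂ hi₃ hy₂.2 hy₃.2
    have := off _ _ hi₃ hi₂ hy₃.2 hy₂.2
    omega

end Walk

open Walk

theorem exists_isCycle_support_eq_of_adj {a b c d : V} (hab : G.Adj a b) (hbc : G.Adj b c)
    (hcd : G.Adj c d) (hda : G.Adj d a) (hac : a ≠ c) (hbd : b ≠ d) :
    ∃ w : G.Walk a a, w.IsCycle ∧ w.support = [a, b, c, d, a] := by
  refine ⟨cons hab (cons hbc (cons hcd (cons hda nil))), ?_, rfl⟩
  rw [isCycle_iff_isPath_tail_and_le_length]
  simp only [Walk.tail_cons, length_cons, length_nil]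
  refine ⟨(isPath_copy ..).mpr ?_, by omega⟩
  simp [isPath_def, hbc.ne, hbd, hab.ne.symm, hcd.ne, hac.symm, hda.ne]

theorem not_isAcyclic_of_forall_exists_adj_ne [Finite V] {u₀ v₀ : V} (h₀ : G.Adj u₀ v₀)
    (h : ∀ x y, G.Adj x y → ∃ z, G.Adj x z ∧ z ≠ y) : ¬ G.IsAcyclic := by
  intro hG
  have : Nonempty V := ⟨u₀⟩
  obtain ⟨a, b, p, hp, hmax⟩ := exists_isPath_forall_isPath_length_le_length G
  have hnil : ¬ p.Nil := by
    have := hmax _ _ h₀.toWalk (by simp [h₀.ne])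
    simp only [Adj.toWalk, length_cons, length_nil] at this
    exact not_nil_iff_lt_length.mpr (by omega)
  obtain ⟨z, hbz, hz⟩ := h b _ (p.adj_penultimate hnil).symm
  by_cases hzp : z ∈ p.support
  · exact hz (hG.eq_penultimate_of_adj_end hp hbz hzp)
  · have := hmax _ _ _ (hp.concat hzp hbz)
    simp at this

variable [Fintype V] [DecidableRel G.Adj]

theorem not_isAcyclic_between {A B : Finset V} (hA : A.Nonempty)
    (hdA : ∀ a ∈ A, 2 ≤ #{b ∈ B | G.Adj a b}) (hdB : ∀ b ∈ B, 2 ≤ #{a ∈ A | G.Adj b a}) :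
    ¬ (G.between ↑A ↑B).IsAcyclic := by
  have hdeg : ∀ x y, x ∈ A ∨ x ∈ B → ∃ z, (G.between ↑A ↑B).Adj x z ∧ z ≠ y := by
    rintro x y (hx | hx)
    · obtain ⟨z, hz, hzy⟩ := exists_mem_ne (hdA x hx) y
      rw [mem_filter] at hz
      exact ⟨z, between_adj.mpr ⟨hz.2, Or.inl ⟨hx, hz.1⟩⟩, hzy⟩
    · obtain ⟨z, hz, hzy⟩ := exists_mem_ne (hdB x hx) y
      rw [mem_filter] at hz
      exact ⟨z, between_adj.mpr ⟨hz.2, Or.inr ⟨hx, hz.1⟩⟩, hzy⟩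
  obtain ⟨a, ha⟩ := hA
  obtain ⟨b, hab, -⟩ := hdeg a a (Or.inl ha)
  exact not_isAcyclic_of_forall_exists_adj_ne hab fun x y h =>
    hdeg x y ((between_adj.mp h).2.imp And.left And.left)

variable [DecidableEq V]

theorem exists_isCycle_card_filter_adj_le_add_two {A B : Finset V} (hAB : Disjoint A B)
    (hA : A.Nonempty) (hdA : ∀ a ∈ A, 2 ≤ #{b ∈ B | G.Adj a b})
    (hdB : ∀ b ∈ B, 2 ≤ #{a ∈ A | G.Adj b a}) :
    ∃ (u : V) (C : G.Walk u u), C.IsCycle ∧ (∀ y ∈ C.support, y ∈ A ∨ y ∈ B) ∧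
      (∃ b ∈ B, b ∈ C.support) ∧
      (∀ a ∈ A, #{b ∈ B | G.Adj a b} ≤ #{b ∈ B \ C.support.toFinset | G.Adj a b} + 2) ∧
      ∀ b ∈ B, #{a ∈ A | G.Adj b a} ≤ #{a ∈ A \ C.support.toFinset | G.Adj b a} + 2 := by
  classical
  set H := G.between ↑A ↑B
  obtain ⟨u, C, hC, hCmin⟩ := exists_egirth_eq_length.mpr (not_isAcyclic_between hA hdA hdB)
  set S := C.support.toFinset
  have hCAB : ∀ i < C.length, C.getVert i ∈ A ∧ C.getVert (i + 1) ∈ B ∨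
      C.getVert i ∈ B ∧ C.getVert (i + 1) ∈ A := fun i hi =>
    (between_adj.mp (C.adj_getVert_succ hi)).2
  have hdrop : ∀ x (X : Finset V), (∀ y ∈ X, G.Adj x y → H.Adj x y) →
      #{y ∈ X | G.Adj x y} ≤ #{y ∈ X \ S | G.Adj x y} + 2 := by
    intro x X hX
    calc #{y ∈ X | G.Adj x y}
        ≤ #({y ∈ X \ S | G.Adj x y} ∪ {y ∈ S | H.Adj x y}) := by
          refine card_le_card fun y hy => ?_
          simp only [mem_filter, mem_union, mem_sdiff] at hy ⊢
          by_cases hyS : y ∈ S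
          · exact Or.inr ⟨hyS, hX y hy.1 hy.2⟩
          · exact Or.inl ⟨⟨hy.1, hyS⟩, hy.2⟩
      _ ≤ _ := (card_union_le _ _).trans (add_le_add_right (hC.card_filter_adj_le_two
          (Colorable.cliqueFree (between_isBipartite (disjoint_coe.mpr hAB)) (by norm_num))
          hCmin x) _)
  refine ⟨u, C.mapLe between_le, hC.mapLe between_le, ?_⟩
  simp only [support_mapLe_eq_support]
  refine ⟨fun y hy => ?_, ?_,
    fun a ha => hdrop a B fun y hy h => between_adj.mpr ⟨h, Or.inl ⟨ha, hy⟩⟩,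
    fun b hb => hdrop b A fun y hy h => between_adj.mpr ⟨h, Or.inr ⟨hb, hy⟩⟩⟩
  · obtain ⟨i, hi, rfl⟩ := exists_getVert_eq_of_mem_support hC.not_nil hy
    exact (hCAB i hi).imp And.left And.left
  · rcases hCAB 0 (C.not_nil_iff_lt_length.mp hC.not_nil) with ⟨-, h⟩ | ⟨h, -⟩
    · exact ⟨_, h, C.getVert_mem_support _⟩
    · exact ⟨_, h, C.getVert_mem_support _⟩

end SimpleGraph

/-- Cycles are packed as a sigma type so that `Fin.cons` can add one more. -/
def HasNDisjointCyclesIn {V : Type*} (G : SimpleGraph V) (k : ℕ) (S : Set V) : Prop :=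
  ∃ c : Fin k → Σ u : V, G.Walk u u, (∀ i, (c i).2.IsCycle) ∧
    (∀ i j, i ≠ j → ∀ y ∈ (c i).2.support, y ∉ (c j).2.support) ∧
    ∀ i, ∀ y ∈ (c i).2.support, y ∈ S

namespace HasNDisjointCyclesIn

variable {V : Type*} {G : SimpleGraph V} {k : ℕ} {S T : Set V}

theorem hasNDisjointCycles (h : HasNDisjointCyclesIn G k S) : HasNDisjointCycles G k :=
  let ⟨c, hcyc, hdisj, _⟩ := h
  ⟨fun i => (c i).1, fun i => (c i).2, hcyc, hdisj⟩

theorem zero : HasNDisjointCyclesIn G 0 S :=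
  ⟨Fin.elim0, fun i => i.elim0, fun i => i.elim0, fun i => i.elim0⟩

theorem cons (h : HasNDisjointCyclesIn G k T) (hTS : T ⊆ S) {u : V} {w : G.Walk u u}
    (hw : w.IsCycle) (hwS : ∀ y ∈ w.support, y ∈ S \ T) : HasNDisjointCyclesIn G (k + 1) S := by
  obtain ⟨c, hcyc, hdisj, hcT⟩ := h
  refine ⟨Fin.cons ⟨u, w⟩ c, Fin.cases hw hcyc, ?_, Fin.cases (fun y hy => (hwS y hy).1)
    fun i y hy => hTS (hcT i y hy)⟩
  intro i j hij y hyi hyj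
  induction i using Fin.cases <;> induction j using Fin.cases
  · exact hij rfl
  · exact (hwS y hyi).2 (hcT _ y hyj)
  · exact (hwS y hyj).2 (hcT _ y hyi)
  · exact hdisj _ _ (fun h => hij (congrArg Fin.succ h)) y hyi hyj

end HasNDisjointCyclesIn

section

open SimpleGraph

variable {V : Type*} [Fintype V] [DecidableEq V] {G : SimpleGraph V} [DecidableRel G.Adj]

theorem hasNDisjointCyclesIn_of_le_card_filter_adj (v : V) (j : ℕ) {A B : Finset V}
    (hAB : Disjoint A B) (hvA : v ∉ A) (hvB : v ∉ B) (hv : ∀ a ∈ A, G.Adj v a)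
    (hA : A.Nonempty) (hdA : ∀ a ∈ A, 2 * j + 1 ≤ #{b ∈ B | G.Adj a b})
    (hdB : ∀ b ∈ B, 2 * j + 2 ≤ #{a ∈ A | G.Adj b a}) :
    HasNDisjointCyclesIn G (j + 1) (insert v (↑A ∪ ↑B)) := by
  induction j generalizing A B with
  | zero =>
    obtain ⟨a, ha⟩ := hA
    obtain ⟨b, hb⟩ := card_pos.mp (hdA a ha)
    rw [mem_filter] at hb
    obtain ⟨a₁, ha₁, a₂, ha₂, hne⟩ := one_lt_card.mp (hdB b hb.1)
    rw [mem_filter] at ha₁ ha₂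
    obtain ⟨w, hw, hsupp⟩ := exists_isCycle_support_eq_of_adj (hv a₁ ha₁.1) ha₁.2.symm ha₂.2
      (hv a₂ ha₂.1).symm (fun h => hvB (h ▸ hb.1)) hne
    refine HasNDisjointCyclesIn.zero.cons (Set.empty_subset _) hw fun y hy => ?_
    simp only [hsupp, List.mem_cons, List.not_mem_nil, or_false] at hy
    rcases hy with rfl | rfl | rfl | rfl | rfl <;> simp [ha₁.1, ha₂.1, hb.1]
  | succ j ih =>
    obtain ⟨u, C, hC, hCAB, ⟨b, hbB, hbC⟩, hdropA, hdropB⟩ :=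
      exists_isCycle_card_filter_adj_le_add_two (G := G) hAB hA
        (fun a ha => by have := hdA a ha; omega) (fun b hb => by have := hdB b hb; omega)
    set S := C.support.toFinset
    have hA' : (A \ S).Nonempty := by
      have := hdropB b hbB
      have := hdB b hbB
      obtain ⟨a, ha⟩ := card_pos.mp (by omega : 0 < #{a ∈ A \ S | G.Adj b a})
      exact ⟨a, (mem_filter.mp ha).1⟩
    have hdA' : ∀ a ∈ A \ S, 2 * j + 1 ≤ #{b ∈ B \ S | G.Adj a b} := fun a ha => by
      have := hdropA a (mem_sdiff.mp ha).1
      have := hdA a (mem_sdiff.mp ha).1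
      omega
    have hdB' : ∀ b ∈ B \ S, 2 * j + 2 ≤ #{a ∈ A \ S | G.Adj b a} := fun b hb => by
      have := hdropB b (mem_sdiff.mp hb).1
      have := hdB b (mem_sdiff.mp hb).1
      omega
    have IH := ih (hAB.mono sdiff_subset sdiff_subset) (fun h => hvA (mem_sdiff.mp h).1)
      (fun h => hvB (mem_sdiff.mp h).1) (fun a ha => hv a (mem_sdiff.mp ha).1) hA' hdA' hdB'
    refine IH.cons ?_ hC fun y hy => ?_
    · intro y
      simp only [Set.mem_insert_iff, Set.mem_union, mem_coe, mem_sdiff]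
      tauto
    · have hyS : y ∈ S := List.mem_toFinset.mpr hy
      have := hCAB y hy
      have hyv : y ≠ v := by rintro rfl; exact this.elim hvA hvB
      simp only [Set.mem_sdiff, Set.mem_insert_iff, Set.mem_union, mem_coe, mem_sdiff]
      tauto

theorem hasNDisjointCycles_of_mul_add_mul_lt_sum (v : V) (j : ℕ) {A B : Finset V}
    (hAB : Disjoint A B) (hvA : v ∉ A) (hvB : v ∉ B) (hv : ∀ a ∈ A, G.Adj v a)
    (h : 2 * j * #A + (2 * j + 1) * #B < ∑ a ∈ A, #{b ∈ B | G.Adj a b}) :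
    HasNDisjointCycles G (j + 1) := by
  obtain ⟨A', hA', B', hB', hne, hdA, hdB⟩ := exists_core_of_mul_add_mul_lt_sum G.Adj _ _ A B h
  refine (hasNDisjointCyclesIn_of_le_card_filter_adj v j (hAB.mono hA' hB') (fun h => hvA (hA' h))
    (fun h => hvB (hB' h)) (fun a ha => hv a (hA' ha)) hne hdA fun b hb => ?_).hasNDisjointCycles
  rw [filter_congr fun a _ => G.adj_comm b a]
  exact hdB b hb

end

theorem stmt9_general (k n : ℕ)
    (G : SimpleGraph (Fin n)) [DecidableRel G.Adj]
    (hG : ¬ HasNDisjointCycles G k)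
    (R' : Set (Fin n)) :
    ∀ v ∈ R',
      (eAB G (G.neighborSet v \ R') (R' \ {v}) : ℝ) ≤
        (2 * (k : ℝ) - 2) * G.degree v + (2 * (k : ℝ) - 1) * R'.ncard := by
  intro v _
  obtain _ | j := k
  · exact absurd (HasNDisjointCyclesIn.zero (S := ∅)).hasNDisjointCycles hG
  have hR := R'.toFinite
  set A := G.neighborFinset v \ hR.toFinset
  set B := hR.toFinset.erase v
  have he : eAB G (G.neighborSet v \ R') (R' \ {v}) = ∑ a ∈ A, #{b ∈ B | G.Adj a b} := by
    rw [← eAB_coe_eq_sum]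
    simp [A, B]
  by_contra! hlt
  refine hG (hasNDisjointCycles_of_mul_add_mul_lt_sum v j (A := A) (B := B)
    (disjoint_left.mpr fun x hxA hxB => (mem_sdiff.mp hxA).2 (mem_of_mem_erase hxB))
    (fun h => G.irrefl ((G.mem_neighborFinset ..).mp (mem_sdiff.mp h).1)) (notMem_erase v _)
    (fun a ha => (G.mem_neighborFinset ..).mp (mem_sdiff.mp ha).1) ?_)
  calc 2 * j * #A + (2 * j + 1) * #B
      ≤ 2 * j * G.degree v + (2 * j + 1) * R'.ncard := by
        gcongr
        · exact (card_le_card sdiff_subset).trans_eq (G.card_neighborFinset_eq_degree v)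
        · exact card_erase_le.trans_eq (Set.ncard_eq_toFinset_card R' hR).symm
    _ < ∑ a ∈ A, #{b ∈ B | G.Adj a b} := by
        have : ((2 * j * G.degree v + (2 * j + 1) * R'.ncard : ℕ) : ℝ) <
            eAB G (G.neighborSet v \ R') (R' \ {v}) := by
          push_cast at hlt ⊢
          linarith
        exact he ▸ mod_cast this

theorem stmt9 (k n : ℕ) (hk : 2 ≤ k) (lam : ℝ) (hlam : lam = 1 / (120 * (k : ℝ) ^ 2))
    (hn : 16 * (2 * (k : ℝ) - 1) / lam ^ 2 ≤ (n : ℝ))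
    (G : SimpleGraph (Fin n)) [DecidableRel G.Adj]
    (hG : ¬ HasNDisjointCycles G k)
    (hmax : ∀ (H : SimpleGraph (Fin n)) [DecidableRel H.Adj],
      ¬ HasNDisjointCycles H k → graphSpectralRadius H ≤ graphSpectralRadius G)
    (ρ : ℝ) (hρ : ρ = graphSpectralRadius G)
    (x : Fin n → ℝ) (hunit : ∑ v, x v ^ 2 = 1) (hnonneg : ∀ v, 0 ≤ x v)
    (heig : G.adjMatrix ℝ *ᵥ x = ρ • x)
    (ustar : Fin n) (hustar : ∀ v, x v ≤ x ustar)
    (R' : Set (Fin n)) (hR' : R' = {v | 4 * lam * x ustar < x v}) :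
    ∀ v ∈ R',
      (eAB G (G.neighborSet v \ R') (R' \ {v}) : ℝ) ≤
        (2 * (k : ℝ) - 2) * G.degree v + (2 * (k : ℝ) - 1) * R'.ncard :=
  stmt9_general k n G hG R'
end
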